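/- arXiv:2212.01026 — 4 statements merged into one kernel-verified Lean document; each statement's English description precedes it below -/
import Mathlib

section
/- (Proposition 1.) Let H̃(H; r) = H − H q qᵀ / ‖q‖₂² where q = (HᵀH)^k r. Then the expectation over r ∼ N(0, I_d) of the random matrix H̃(H; r) equals U Σ̃ Vᵀ, where Σ̃ = diag((1−λ_1(k))σ_1, (1−λ_2(k))σ_2, …, (1−λ_d(k))σ_d). -/
/-!
Substituting `r = V y`, which leaves `N(0, I_d)` invariant, turns `q` into `V z` with
`z = Σ^{2k} y`, so that `‖q‖ = ‖z‖` and `H̃(H; V y) = H - (H V) (z zᵀ / ‖z‖²) Vᵀ` with `H V = U Σ`.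
The entries of `z zᵀ / ‖z‖²` are bounded by `1`; flipping the sign of one coordinate of `y` shows
that the off-diagonal ones have mean zero, and the diagonal ones have means `λ_i(k)`.
Hence `E H̃ = H - U Σ diag(λ) Vᵀ = U Σ̃ Vᵀ`.
-/

open MeasureTheory ProbabilityTheory Matrix

/-- The standard Gaussian measure `N(0, I_d)` on `ℝ^d`, as the `d`-fold product of the
standard real Gaussian. -/
noncomputable def stdGaussian (d : ℕ) : Measure (Fin d → ℝ) :=
  Measure.pi (fun _ => gaussianReal 0 1)

namespace Matrix

variable {ι : Type*} [Fintype ι] [DecidableEq ι]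

theorem sum_sq_mulVec_of_transpose_mul_self {V : Matrix ι ι ℝ} (hV : Vᵀ * V = 1)
    (x : ι → ℝ) : ∑ l, (V *ᵥ x) l ^ 2 = ∑ l, x l ^ 2 := by
  simpa only [dotProduct, sq] using
    show (V *ᵥ x) ⬝ᵥ (V *ᵥ x) = x ⬝ᵥ x by
      rw [dotProduct_mulVec, ← vecMul_transpose, vecMul_vecMul, hV, vecMul_one]

noncomputable def toEuclideanIsometryEquiv {V : Matrix ι ι ℝ} (hV : Vᵀ * V = 1) :
    EuclideanSpace ℝ ι ≃ₗᵢ[ℝ] EuclideanSpace ℝ ι :=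
  LinearIsometry.toLinearIsometryEquiv
    { toLinearMap := toEuclideanLin V
      norm_map' := fun x => by
        rw [← sq_eq_sq₀ (norm_nonneg _) (norm_nonneg _), EuclideanSpace.real_norm_sq_eq,
          EuclideanSpace.real_norm_sq_eq]
        exact sum_sq_mulVec_of_transpose_mul_self hV x.ofLp }
    rfl

end Matrix

instance (d : ℕ) : IsProbabilityMeasure (stdGaussian d) := by
  unfold _root_.stdGaussian; infer_instance

theorem stdGaussian_eq_map_ofLp (d : ℕ) :
    stdGaussian d = (ProbabilityTheory.stdGaussian (EuclideanSpace ℝ (Fin d))).map WithLp.ofLp := by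
  rw [← map_pi_eq_stdGaussian, Measure.map_map (by fun_prop) (by fun_prop)]
  simp [_root_.stdGaussian, Function.comp_def]

theorem measurePreserving_mulVec_stdGaussian {d : ℕ} {V : Matrix (Fin d) (Fin d) ℝ}
    (hV : Vᵀ * V = 1) : MeasurePreserving (V *ᵥ ·) (stdGaussian d) (stdGaussian d) := by
  refine ⟨by fun_prop, ?_⟩
  have : (V *ᵥ ·) ∘ WithLp.ofLp = WithLp.ofLp ∘ (toEuclideanIsometryEquiv hV) := rfl
  rw [stdGaussian_eq_map_ofLp, Measure.map_map (by fun_prop) (by fun_prop), this,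
    ← Measure.map_map (by fun_prop) (by fun_prop), stdGaussian_map]

theorem integral_comp_mulVec_stdGaussian {E : Type*} [NormedAddCommGroup E] [NormedSpace ℝ E]
    {d : ℕ} {V : Matrix (Fin d) (Fin d) ℝ} (hV : Vᵀ * V = 1) (f : (Fin d → ℝ) → E) :
    ∫ y, f (V *ᵥ y) ∂stdGaussian d = ∫ y, f y ∂stdGaussian d :=
  (measurePreserving_mulVec_stdGaussian hV).integral_comp
    (Homeomorph.measurableEmbedding
      (toLinearEquiv' V (invertibleOfLeftInverse _ _ hV)).toContinuousLinearEquiv.toHomeomorph) f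

section NormalizedOuter

variable {ι : Type*} [Fintype ι]

-- `0` at `z = 0`, matching the convention `0⁻¹ = 0` in the definition of `H̃`
noncomputable def normalizedOuter (z : ι → ℝ) (a b : ι) : ℝ :=
  z a * z b / ∑ l, z l ^ 2

theorem abs_normalizedOuter_le_one (z : ι → ℝ) (a b : ι) : |normalizedOuter z a b| ≤ 1 := by
  have hS : 0 ≤ ∑ l, z l ^ 2 := by positivity
  have hle : ∀ l, |z l| ≤ √(∑ l, z l ^ 2) := fun l =>
    Real.abs_le_sqrt (Finset.single_le_sum (fun l _ => sq_nonneg (z l)) (Finset.mem_univ l))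
  rw [normalizedOuter, abs_div, abs_of_nonneg hS, abs_mul]
  refine div_le_one_of_le₀ ?_ hS
  calc |z a| * |z b| ≤ √(∑ l, z l ^ 2) * √(∑ l, z l ^ 2) :=
        mul_le_mul (hle a) (hle b) (abs_nonneg _) (Real.sqrt_nonneg _)
    _ = ∑ l, z l ^ 2 := Real.mul_self_sqrt hS

theorem integrable_normalizedOuter_comp {α : Type*} [MeasurableSpace α] {μ : Measure α}
    [IsFiniteMeasure μ] {f : α → ι → ℝ} (hf : Measurable f) (a b : ι) :
    Integrable (fun x => normalizedOuter (f x) a b) μ := by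
  refine .of_bound (Measurable.aestronglyMeasurable ?_) 1 (ae_of_all _ fun x => ?_)
  · unfold normalizedOuter; fun_prop
  · exact abs_normalizedOuter_le_one _ _ _

theorem normalizedOuter_mul_of_sq_eq_one {s : ι → ℝ} (hs : ∀ l, s l ^ 2 = 1) (z : ι → ℝ)
    (a b : ι) : normalizedOuter (s * z) a b = s a * s b * normalizedOuter z a b := by
  simp only [normalizedOuter, Pi.mul_apply, mul_pow, hs, one_mul]
  ring

theorem mulVec_mul_mulVec_div_sum_sq {m p : Type*} (A : Matrix m ι ℝ) (B : Matrix p ι ℝ)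
    (z : ι → ℝ) (i : m) (j : p) :
    (A *ᵥ z) i * (B *ᵥ z) j / ∑ l, z l ^ 2 = ∑ a, ∑ b, A i a * B j b * normalizedOuter z a b := by
  simp only [mulVec, dotProduct, Finset.sum_mul_sum, Finset.sum_div, normalizedOuter]
  exact Finset.sum_congr rfl fun a _ => Finset.sum_congr rfl fun b _ => by ring

theorem integrable_sum_mul_normalizedOuter_comp {α : Type*} [MeasurableSpace α] {μ : Measure α}
    [IsFiniteMeasure μ] {f : α → ι → ℝ} (hf : Measurable f) (M : ι → ι → ℝ) :
    Integrable (fun x => ∑ a, ∑ b, M a b * normalizedOuter (f x) a b) μ :=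
  integrable_finsetSum _ fun a _ => integrable_finsetSum _ fun b _ =>
    (integrable_normalizedOuter_comp hf a b).const_mul _

end NormalizedOuter

theorem integral_normalizedOuter_mul_of_ne {d : ℕ} (c : Fin d → ℝ) {a b : Fin d} (hab : a ≠ b) :
    ∫ y, normalizedOuter (c * y) a b ∂stdGaussian d = 0 := by
  -- flipping the sign of `y a` is an orthogonal change of variables that negates the integrand
  set s : Fin d → ℝ := fun l => if l = a then -1 else 1
  have hs : ∀ l, s l ^ 2 = 1 := fun l => by by_cases h : l = a <;> simp [s, h]
  have hflip_orth : (diagonal s)ᵀ * diagonal s = 1 := by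
    rw [diagonal_transpose, diagonal_mul_diagonal, ← diagonal_one]
    simp only [← sq, hs]
  have hflip : ∀ y, normalizedOuter (c * (diagonal s *ᵥ y)) a b = -normalizedOuter (c * y) a b := by
    intro y
    rw [show c * (diagonal s *ᵥ y) = s * (c * y) by ext l; simp [mulVec_diagonal]; ring,
      normalizedOuter_mul_of_sq_eq_one hs]
    simp [s, hab.symm]
  have h := integral_comp_mulVec_stdGaussian hflip_orth fun y => normalizedOuter (c * y) a b
  simp only [hflip, integral_neg] at h
  linarith

theorem integral_sum_mul_normalizedOuter {d : ℕ} (M : Fin d → Fin d → ℝ) (c : Fin d → ℝ) :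
    ∫ y, ∑ a, ∑ b, M a b * normalizedOuter (c * y) a b ∂stdGaussian d =
      ∑ a, M a a * ∫ y, normalizedOuter (c * y) a a ∂stdGaussian d := by
  have hint : ∀ a b, Integrable (fun y => M a b * normalizedOuter (c * y) a b) (stdGaussian d) :=
    fun a b => (integrable_normalizedOuter_comp (by fun_prop) a b).const_mul _
  rw [integral_finsetSum _ fun a _ => integrable_finsetSum _ fun b _ => hint a b]
  refine Finset.sum_congr rfl fun a _ => ?_
  rw [integral_finsetSum _ fun b _ => hint a b, Finset.sum_eq_single a]
  · exact integral_const_mul _ _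
  · intro b _ hba
    rw [integral_const_mul, integral_normalizedOuter_mul_of_ne c hba.symm, mul_zero]
  · simp

section SingularValueDecomposition

variable {m ι : Type*} [Fintype ι] [DecidableEq ι] {H U : Matrix m ι ℝ} {V : Matrix ι ι ℝ}
  {σ : ι → ℝ}

theorem mul_eq_mul_diagonal_of_svd (hV : Vᵀ * V = 1) (hH : H = U * diagonal σ * Vᵀ) :
    H * V = U * diagonal σ := by
  rw [hH, Matrix.mul_assoc, hV, Matrix.mul_one]

theorem transpose_mul_self_pow_mul_eq_of_svd [Fintype m] (hU : Uᵀ * U = 1) (hV : Vᵀ * V = 1)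
    (hH : H = U * diagonal σ * Vᵀ) (k : ℕ) :
    (Hᵀ * H) ^ k * V = V * diagonal (σ ^ (2 * k)) := by
  have hgram : V * diagonal (σ ^ 2) = Hᵀ * H * V := by
    rw [Matrix.mul_assoc, mul_eq_mul_diagonal_of_svd hV hH, hH, transpose_mul, transpose_mul,
      transpose_transpose, diagonal_transpose, Matrix.mul_assoc V, Matrix.mul_assoc,
      ← Matrix.mul_assoc Uᵀ, hU, Matrix.one_mul, diagonal_mul_diagonal, sq]
    rfl
  rw [pow_mul, ← diagonal_pow]
  exact (SemiconjBy.pow_right hgram k).symm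

theorem sub_mul_diagonal_mul_transpose_of_svd (hV : Vᵀ * V = 1) (hH : H = U * diagonal σ * Vᵀ)
    (lam : ι → ℝ) :
    H - H * V * diagonal lam * Vᵀ = U * diagonal (fun i => (1 - lam i) * σ i) * Vᵀ := by
  rw [mul_eq_mul_diagonal_of_svd hV hH, hH]
  simp only [Matrix.mul_assoc]
  rw [← Matrix.mul_sub, ← Matrix.mul_assoc (diagonal σ), diagonal_mul_diagonal, ← Matrix.sub_mul,
    diagonal_sub]
  congr 3
  funext i
  ring

end SingularValueDecomposition

theorem mul_diagonal_mul_transpose_apply {R m p ι : Type*} [Semiring R] [Fintype ι]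
    [DecidableEq ι] (A : Matrix m ι R) (w : ι → R) (B : Matrix p ι R) (i : m) (j : p) :
    (A * diagonal w * Bᵀ) i j = ∑ a, A i a * w a * B j a := by
  rw [mul_apply]
  simp only [mul_diagonal, transpose_apply]

theorem expectation_spectral_augmentation_general
    (n d k : ℕ)
    (H U : Matrix (Fin n) (Fin d) ℝ) (V : Matrix (Fin d) (Fin d) ℝ)
    (σ : Fin d → ℝ)
    (hU : Uᵀ * U = 1) (hV₁ : Vᵀ * V = 1)
    (hH : H = U * Matrix.diagonal σ * Vᵀ)
    (lam : Fin d → ℝ)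
    (hlam : ∀ i, lam i =
      ∫ y, (σ i ^ (4 * k) * (y i) ^ 2) / (∑ l, σ l ^ (4 * k) * (y l) ^ 2)
        ∂(stdGaussian d))
    (q : (Fin d → ℝ) → (Fin d → ℝ))
    (hq : ∀ r, q r = ((Hᵀ * H) ^ k) *ᵥ r)
    (Htilde : (Fin d → ℝ) → Matrix (Fin n) (Fin d) ℝ)
    (hHtilde : ∀ r, Htilde r =
      H - (∑ l, (q r l) ^ 2)⁻¹ • Matrix.vecMulVec (H *ᵥ q r) (q r)) :
    ∀ i j, ∫ r, Htilde r i j ∂(stdGaussian d) =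
      (U * Matrix.diagonal (fun i => (1 - lam i) * σ i) * Vᵀ) i j := by
  intro i j
  set c : Fin d → ℝ := σ ^ (2 * k)
  have hqV : ∀ y, q (V *ᵥ y) = V *ᵥ (c * y) := fun y => by
    rw [hq, mulVec_mulVec, transpose_mul_self_pow_mul_eq_of_svd hU hV₁ hH, ← mulVec_mulVec]
    congr 1
    ext l
    exact mulVec_diagonal _ _ _
  have hHtildeV : ∀ y, Htilde (V *ᵥ y) i j =
      H i j - ∑ a, ∑ b, (H * V) i a * V j b * normalizedOuter (c * y) a b := fun y => by
    rw [← mulVec_mul_mulVec_div_sum_sq, hHtilde, hqV, mulVec_mulVec,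
      sum_sq_mulVec_of_transpose_mul_self hV₁]
    simp only [Matrix.sub_apply, Matrix.smul_apply, vecMulVec_apply, smul_eq_mul, div_eq_inv_mul]
  have hdiag : ∀ a, ∫ y, normalizedOuter (c * y) a a ∂stdGaussian d = lam a := fun a => by
    simp only [hlam, normalizedOuter, c, Pi.mul_apply, Pi.pow_apply, mul_pow, ← pow_mul]
    ring_nf
  calc ∫ r, Htilde r i j ∂stdGaussian d
      = ∫ y, Htilde (V *ᵥ y) i j ∂stdGaussian d := (integral_comp_mulVec_stdGaussian hV₁ _).symm
    _ = H i j - ∑ a, (H * V) i a * lam a * V j a := by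
      simp only [hHtildeV]
      rw [integral_sub (integrable_const _)
        (integrable_sum_mul_normalizedOuter_comp (by fun_prop) _), integral_const,
        integral_sum_mul_normalizedOuter]
      simp [hdiag, mul_right_comm]
    _ = _ := by
      rw [← sub_mul_diagonal_mul_transpose_of_svd hV₁ hH, Matrix.sub_apply,
        mul_diagonal_mul_transpose_apply]

/-- (Proposition 1.)  Let `H̃(H; r) = H − H q qᵀ / ‖q‖₂²` with `q = (HᵀH)^k r`.  Then the
expectation over `r ∼ N(0, I_d)` of `H̃(H; r)` equals `U Σ̃ Vᵀ`, where
`Σ̃ = diag((1−λ_1(k))σ_1, …, (1−λ_d(k))σ_d)` (stated entrywise). -/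
theorem expectation_spectral_augmentation
    (n d k : ℕ) (hn : 1 ≤ n) (hd : 1 ≤ d) (hk : 1 ≤ k)
    (H U : Matrix (Fin n) (Fin d) ℝ) (V : Matrix (Fin d) (Fin d) ℝ)
    (σ : Fin d → ℝ) (hσpos : ∀ i, 0 < σ i)
    (hσsorted : ∀ i j : Fin d, i ≤ j → σ j ≤ σ i)
    (hU : Uᵀ * U = 1) (hV₁ : Vᵀ * V = 1) (hV₂ : V * Vᵀ = 1)
    (hH : H = U * Matrix.diagonal σ * Vᵀ)
    (lam : Fin d → ℝ)
    (hlam : ∀ i, lam i =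
      ∫ y, (σ i ^ (4 * k) * (y i) ^ 2) / (∑ l, σ l ^ (4 * k) * (y l) ^ 2)
        ∂(stdGaussian d))
    (q : (Fin d → ℝ) → (Fin d → ℝ))
    (hq : ∀ r, q r = ((Hᵀ * H) ^ k) *ᵥ r)
    (Htilde : (Fin d → ℝ) → Matrix (Fin n) (Fin d) ℝ)
    (hHtilde : ∀ r, Htilde r =
      H - (∑ l, (q r l) ^ 2)⁻¹ • Matrix.vecMulVec (H *ᵥ q r) (q r)) :
    ∀ i j, ∫ r, Htilde r i j ∂(stdGaussian d) =
      (U * Matrix.diagonal (fun i => (1 - lam i) * σ i) * Vᵀ) i j :=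
  expectation_spectral_augmentation_general n d k H U V σ hU hV₁ hH lam hlam q hq Htilde hHtilde
end

section
/- Spectrum flattening: for every k ≥ 1 and all indices i, j with σ_i ≥ σ_j > 0, the rebalanced singular values satisfy ((1−λ_i(k)) σ_i) / ((1−λ_j(k)) σ_j) ≤ σ_i / σ_j, provided 1−λ_j(k) > 0; i.e., the output spectrum (1−λ_i(k))σ_i is flatter (has smaller consecutive ratios) than the input spectrum σ_i. -/
/-!
With `c l = σ_l ^ (4k)`, `λ_i(k)` is the Gaussian mean of the share `c_i y_i² / ∑ c_l y_l²`.
The coordinate swap `y ↦ y ∘ (i j)` preserves the Gaussian, so `λ_j ≤ λ_i` follows from the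
pointwise inequality "share of `j` at `y` and at its swap ≤ share of `i` at `y` and at its swap",
an elementary inequality in `u = y_i²`, `v = y_j²` and the rest `R` of the sum, valid because
`c_j ≤ c_i`. Then `1 - λ_i ≤ 1 - λ_j`, which is the flattening.
-/

open MeasureTheory ProbabilityTheory

open Finset

theorem div_add_div_swap_le {a b u v R : ℝ} (hb : 0 < b) (hba : b ≤ a) (hu : 0 ≤ u)
    (hv : 0 ≤ v) (hR : 0 ≤ R) :
    b * v / (a * u + b * v + R) + b * u / (a * v + b * u + R) ≤
      a * u / (a * u + b * v + R) + a * v / (a * v + b * u + R) := by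
  have ha : 0 < a := hb.trans_le hba
  rcases (show 0 ≤ a * u + b * v + R by positivity).eq_or_lt with h₁ | h₁
  · obtain ⟨rfl, rfl, rfl⟩ : u = 0 ∧ v = 0 ∧ R = 0 := by
      refine ⟨?_, ?_, ?_⟩ <;> nlinarith [mul_nonneg ha.le hu, mul_nonneg hb.le hv]
    simp
  -- `a (a v + b u + R) ≥ b (a u + b v + R)`
  have h₂ : 0 < a * v + b * u + R := by
    nlinarith [mul_le_mul_of_nonneg_right hba hv, mul_le_mul_of_nonneg_right hba hR, mul_pos hb h₁]
  rw [div_add_div _ _ h₁.ne' h₂.ne', div_add_div _ _ h₁.ne' h₂.ne',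
    div_le_div_iff_of_pos_right (by positivity)]
  -- the difference of the numerators is `2 (a² - b²) u v + (a - b) (u + v) R`
  nlinarith [mul_nonneg (mul_nonneg hR hu) (sub_nonneg.2 hba),
    mul_nonneg (mul_nonneg hR hv) (sub_nonneg.2 hba),
    mul_nonneg (mul_nonneg hu hv) (sub_nonneg.2 hba)]

theorem MeasureTheory.measurePreserving_comp_perm_pi {ι : Type*} [Fintype ι] (ν : Measure ℝ)
    [SigmaFinite ν] (e : Equiv.Perm ι) :
    MeasurePreserving (fun y : ι → ℝ => y ∘ e) (Measure.pi fun _ => ν) (Measure.pi fun _ => ν) := by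
  convert measurePreserving_arrowCongr' (fun _ => ν) (fun _ => ν) e.symm (MeasurableEquiv.refl ℝ)
    (fun _ => MeasurePreserving.id ν)
  rfl

section EnergyShare

variable {ι : Type*} [Fintype ι] (c : ι → ℝ)

noncomputable def energyShare (y : ι → ℝ) (m : ι) : ℝ :=
  c m * y m ^ 2 / ∑ l, c l * y l ^ 2

variable {c}

theorem energyShare_mem_Icc (hc : ∀ l, 0 ≤ c l) (y : ι → ℝ) (m : ι) :
    energyShare c y m ∈ Set.Icc 0 1 := by
  have hterm : ∀ l, 0 ≤ c l * y l ^ 2 := fun l => mul_nonneg (hc l) (sq_nonneg _)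
  have hsum : 0 ≤ ∑ l, c l * y l ^ 2 := sum_nonneg fun l _ => hterm l
  exact ⟨div_nonneg (hterm m) hsum,
    div_le_one_of_le₀ (single_le_sum (fun l _ => hterm l) (mem_univ m)) hsum⟩

theorem measurable_energyShare (m : ι) : Measurable fun y => energyShare c y m := by
  unfold energyShare; fun_prop

theorem integrable_energyShare {μ : Measure (ι → ℝ)} [IsFiniteMeasure μ] (hc : ∀ l, 0 ≤ c l)
    (m : ι) : Integrable (fun y => energyShare c y m) μ :=
  .of_bound (measurable_energyShare m).aestronglyMeasurable 1 <| ae_of_all _ fun y => by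
    obtain ⟨h₀, h₁⟩ := energyShare_mem_Icc hc y m
    rwa [Real.norm_of_nonneg h₀]

variable [DecidableEq ι]

theorem sum_eq_add_add_sum_compl_pair {M : Type*} [AddCommMonoid M] {i j : ι} (hij : i ≠ j)
    (f : ι → M) : ∑ l, f l = f i + f j + ∑ l ∈ {i, j}ᶜ, f l := by
  rw [← sum_pair hij, sum_add_sum_compl]

theorem energyShare_add_comp_swap_le (hc : ∀ l, 0 < c l) {i j : ι} (hji : c j ≤ c i)
    (y : ι → ℝ) :
    energyShare c y j + energyShare c (y ∘ Equiv.swap i j) j ≤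
      energyShare c y i + energyShare c (y ∘ Equiv.swap i j) i := by
  rcases eq_or_ne i j with rfl | hij
  · rfl
  set R := ∑ l ∈ {i, j}ᶜ, c l * y l ^ 2
  have hS : ∑ l, c l * y l ^ 2 = c i * y i ^ 2 + c j * y j ^ 2 + R :=
    sum_eq_add_add_sum_compl_pair hij _
  have hS_swap : ∑ l, c l * (y ∘ Equiv.swap i j) l ^ 2 = c i * y j ^ 2 + c j * y i ^ 2 + R := by
    rw [sum_eq_add_add_sum_compl_pair hij]
    refine congrArg₂ _ (by simp) (sum_congr rfl fun l hl => ?_)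
    simp only [mem_compl, mem_insert, mem_singleton, not_or] at hl
    simp [Equiv.swap_apply_of_ne_of_ne hl.1 hl.2]
  have hR : 0 ≤ R := sum_nonneg fun l _ => mul_nonneg (hc l).le (sq_nonneg (y l))
  unfold energyShare
  rw [hS, hS_swap]
  simpa only [Function.comp_apply, Equiv.swap_apply_left, Equiv.swap_apply_right] using
    div_add_div_swap_le (hc j) hji (sq_nonneg (y i)) (sq_nonneg (y j)) hR

theorem integral_energyShare_le_of_le {μ : Measure (ι → ℝ)} [IsFiniteMeasure μ] {i j : ι}
    (hμ : MeasurePreserving (fun y => y ∘ Equiv.swap i j) μ μ) (hc : ∀ l, 0 < c l)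
    (hji : c j ≤ c i) :
    ∫ y, energyShare c y j ∂μ ≤ ∫ y, energyShare c y i ∂μ := by
  have hint m : Integrable (fun y => energyShare c y m) μ :=
    integrable_energyShare (fun l => (hc l).le) m
  have hint_swap m : Integrable (fun y => energyShare c (y ∘ Equiv.swap i j) m) μ :=
    hμ.integrable_comp_of_integrable (hint m)
  have hswap m : ∫ y, energyShare c (y ∘ Equiv.swap i j) m ∂μ = ∫ y, energyShare c y m ∂μ := by
    conv_rhs => rw [← hμ.map_eq]
    exact (integral_map hμ.aemeasurable (measurable_energyShare m).aestronglyMeasurable).symm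
  have hsum := integral_mono ((hint j).add (hint_swap j)) ((hint i).add (hint_swap i))
    (energyShare_add_comp_swap_le hc hji)
  simp only [Pi.add_apply] at hsum
  rw [integral_add (hint j) (hint_swap j), integral_add (hint i) (hint_swap i), hswap, hswap]
    at hsum
  linarith

end EnergyShare

theorem spectrum_flattening_general
    (d k : ℕ)
    (σ : Fin d → ℝ) (hσpos : ∀ i, 0 < σ i)
    (lam : Fin d → ℝ)
    (hlam : ∀ i, lam i =
      ∫ y, (σ i ^ (4 * k) * (y i) ^ 2) / (∑ l, σ l ^ (4 * k) * (y l) ^ 2)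
        ∂(stdGaussian d)) :
    ∀ i j : Fin d, σ j ≤ σ i → 0 < 1 - lam j →
      ((1 - lam i) * σ i) / ((1 - lam j) * σ j) ≤ σ i / σ j := by
  intro i j hji hj
  have hlam_le : lam j ≤ lam i := by
    rw [hlam i, hlam j]
    exact integral_energyShare_le_of_le (measurePreserving_comp_perm_pi _ _)
      (fun l => pow_pos (hσpos l) _) (pow_le_pow_left₀ (hσpos j).le hji _)
  calc ((1 - lam i) * σ i) / ((1 - lam j) * σ j)
      ≤ ((1 - lam j) * σ i) / ((1 - lam j) * σ j) := by
        gcongr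
        exacts [(mul_pos hj (hσpos j)).le, (hσpos i).le]
    _ = σ i / σ j := mul_div_mul_left _ _ hj.ne'

/-- Spectrum flattening: for every `k ≥ 1` and all indices `i, j` with `σ_i ≥ σ_j > 0`,
the rebalanced singular values satisfy
`((1−λ_i(k)) σ_i) / ((1−λ_j(k)) σ_j) ≤ σ_i / σ_j`, provided `1 − λ_j(k) > 0`. -/
theorem spectrum_flattening
    (d k : ℕ) (hd : 1 ≤ d) (hk : 1 ≤ k)
    (σ : Fin d → ℝ) (hσpos : ∀ i, 0 < σ i)
    (hσsorted : ∀ i j : Fin d, i ≤ j → σ j ≤ σ i)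
    (lam : Fin d → ℝ)
    (hlam : ∀ i, lam i =
      ∫ y, (σ i ^ (4 * k) * (y i) ^ 2) / (∑ l, σ l ^ (4 * k) * (y l) ^ 2)
        ∂(stdGaussian d)) :
    ∀ i j : Fin d, σ j ≤ σ i → 0 < 1 - lam j →
      ((1 - lam i) * σ i) / ((1 - lam j) * σ j) ≤ σ i / σ j :=
  spectrum_flattening_general d k σ hσpos lam hlam
end

section
/- (Density in Proposition 2.) Let α > 0 and γ > 0. Let u and v be independent real random variables where u has the Gamma distribution with shape 1/2 and scale 2 (density f_u(t) = t^{−1/2} e^{−t/2} / (2^{1/2} Γ(1/2)) for t > 0), and v has the Gamma distribution with shape α and scale 2γ (density f_v(t) = t^{α−1} e^{−t/(2γ)} / ((2γ)^{α} Γ(α)) for t > 0). Then the random variable Z = u/(u+v) takes values in (0,1) and has probability density f_Z(z) = ( γ / (1 − (1−γ)z)² ) · w^{−1/2} (1−w)^{α−1} / B(1/2, α) for z ∈ (0,1), where w = γ z / (1 − (1−γ)z) and B(1/2, α) = Γ(1/2)Γ(α)/Γ(1/2+α) is the Beta function. -/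
/-!
Conditionally on `v = y > 0`, the substitution `x = y z / (1 - z)` is a bijection from `(0, 1)`
onto `(0, ∞)` inverting `x ↦ x / (x + y)`, so the law of `u / (u + v)` has density
`z ↦ ∫ f_v(y) · y / (1 - z)² · f_u(y z / (1 - z)) dy` on `(0, 1)`. For Gamma laws the integrand is,
as a function of `y`, a multiple of a Gamma density of shape `1/2 + α`; its normalisation produces
the Beta function, and the resulting density is the Beta`(1/2, α)` density at `w` times `dw/dz`.
-/

open MeasureTheory ProbabilityTheory Real Set
open scoped ENNReal

lemma setLIntegral_Ioi_zero_eq_lintegral {μ : Measure ℝ} [NullSingletonClass μ] {f : ℝ → ℝ≥0∞}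
    (hf : ∀ x < 0, f x = 0) : ∫⁻ x in Ioi 0, f x ∂μ = ∫⁻ x, f x ∂μ := by
  rw [setLIntegral_congr Ioi_ae_eq_Ici]
  exact setLIntegral_eq_of_support_subset fun x hx ↦ not_lt.1 fun h ↦ hx (hf x h)

lemma ae_pos_of_map_eq_gammaMeasure {Ω : Type*} [MeasurableSpace Ω] {μ : Measure Ω} {w : Ω → ℝ}
    (hw : Measurable w) {a r : ℝ} (hlaw : μ.map w = gammaMeasure a r) : ∀ᵐ ω ∂μ, 0 < w ω := by
  have : ∀ᵐ x ∂gammaMeasure a r, 0 < x := by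
    refine (ae_withDensity_iff (measurable_gammaPDFReal a r).ennreal_ofReal).2 ?_
    filter_upwards [volume.ae_ne 0] with x hx hpdf
    exact hx.lt_or_gt.resolve_left fun h ↦ hpdf (gammaPDF_of_neg h)
  rw [← hlaw] at this
  exact (ae_map_iff hw.aemeasurable measurableSet_Ioi).1 this

lemma image_mul_div_one_sub {y : ℝ} (hy : 0 < y) (s : Set ℝ) :
    (fun z ↦ y * z / (1 - z)) '' (Ioo 0 1 ∩ s) = Ioi 0 ∩ (fun x ↦ x / (x + y)) ⁻¹' s := by
  ext x
  constructor
  · rintro ⟨z, ⟨⟨hz₀, hz₁⟩, hzs⟩, rfl⟩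
    have ht : 0 < 1 - z := by linarith
    have hinv : y * z / (1 - z) / (y * z / (1 - z) + y) = z := by
      field_simp
      ring
    exact ⟨mem_Ioi.2 (by positivity), by simpa only [mem_preimage, hinv]⟩
  · rintro ⟨hx : 0 < x, hxs⟩
    refine ⟨x / (x + y), ⟨⟨by positivity, (div_lt_one (by positivity)).2 (by linarith)⟩, hxs⟩, ?_⟩
    field_simp [hy.ne']
    ring

lemma setLIntegral_preimage_div_add {f : ℝ → ℝ≥0∞} (hf : ∀ x < 0, f x = 0) {s : Set ℝ}
    (hs : MeasurableSet s) {y : ℝ} (hy : 0 < y) :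
    ∫⁻ x in (fun x ↦ x / (x + y)) ⁻¹' s, f x =
      ∫⁻ z in Ioo 0 1 ∩ s, ENNReal.ofReal (y / (1 - z) ^ 2) * f (y * z / (1 - z)) := by
  have hderiv : ∀ z ∈ Ioo (0 : ℝ) 1 ∩ s,
      HasDerivWithinAt (fun z ↦ y * z / (1 - z)) (y / (1 - z) ^ 2) (Ioo 0 1 ∩ s) z := by
    intro z hz
    have ht : 1 - z ≠ 0 := by linarith [hz.1.2]
    refine (((hasDerivAt_id' z).const_mul y).div ((hasDerivAt_id' z).const_sub 1) ht).congr_deriv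
      ?_ |>.hasDerivWithinAt
    field_simp
    ring
  have hinj : InjOn (fun z ↦ y * z / (1 - z)) (Ioo 0 1 ∩ s) := by
    intro z₁ hz₁ z₂ hz₂ h
    have ht₁ : 1 - z₁ ≠ 0 := by linarith [hz₁.1.2]
    have ht₂ : 1 - z₂ ≠ 0 := by linarith [hz₂.1.2]
    rw [div_eq_div_iff ht₁ ht₂] at h
    exact mul_left_cancel₀ hy.ne' (by linear_combination h)
  rw [← setLIntegral_Ioi_zero_eq_lintegral hf, Measure.restrict_restrict measurableSet_Ioi,
    ← image_mul_div_one_sub hy,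
    lintegral_image_eq_lintegral_abs_deriv_mul (measurableSet_Ioo.inter hs) hderiv hinj]
  refine setLIntegral_congr_fun (measurableSet_Ioo.inter hs) fun z hz ↦ ?_
  have ht : 0 < 1 - z := by linarith [hz.1.2]
  rw [abs_of_pos (by positivity)]

theorem map_div_add_prod_withDensity {f g : ℝ → ℝ≥0∞} (hf : Measurable f) (hg : Measurable g)
    (hf₀ : ∀ x < 0, f x = 0) (hg₀ : ∀ y < 0, g y = 0) :
    ((volume.withDensity f).prod (volume.withDensity g)).map (fun p ↦ p.1 / (p.1 + p.2)) =
      volume.withDensity ((Ioo 0 1).indicator fun z ↦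
        ∫⁻ y in Ioi 0, g y * (ENNReal.ofReal (y / (1 - z) ^ 2) * f (y * z / (1 - z)))) := by
  have hmeas : Measurable fun p : ℝ × ℝ ↦ p.1 / (p.1 + p.2) := by fun_prop
  ext s hs
  have hA : MeasurableSet ((fun p : ℝ × ℝ ↦ p.1 / (p.1 + p.2)) ⁻¹' s) := hmeas hs
  have hsection : ∀ y, MeasurableSet ((fun x ↦ x / (x + y)) ⁻¹' s) := fun y ↦
    measurable_prodMk_right hA
  rw [Measure.map_apply hmeas hs, withDensity_apply _ hs, lintegral_indicator measurableSet_Ioo,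
    Measure.restrict_restrict measurableSet_Ioo, Measure.prod_apply_symm hA,
    lintegral_withDensity_eq_lintegral_mul _ hg (measurable_measure_prodMk_right hA),
    ← setLIntegral_Ioi_zero_eq_lintegral fun y hy ↦ by simp [hg₀ y hy]]
  calc ∫⁻ y in Ioi 0, g y * volume.withDensity f ((fun x ↦ x / (x + y)) ⁻¹' s)
      = ∫⁻ y in Ioi 0, ∫⁻ z in Ioo 0 1 ∩ s,
          g y * (ENNReal.ofReal (y / (1 - z) ^ 2) * f (y * z / (1 - z))) := by
        refine setLIntegral_congr_fun measurableSet_Ioi fun y (hy : 0 < y) ↦ ?_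
        rw [withDensity_apply _ (hsection y), setLIntegral_preimage_div_add hf₀ hs hy,
          lintegral_const_mul _ (by fun_prop)]
    _ = _ := lintegral_lintegral_swap (by fun_prop)

/-- The density on `(0, 1)` of `X / (X + Y)` for independent `X ∼ Gamma(a, r)`, `Y ∼ Gamma(b, s)`
(shapes and rates, as in `gammaMeasure`). -/
noncomputable def gammaRatioPDFReal (a r b s z : ℝ) : ℝ :=
  Gamma (a + b) / (Gamma a * Gamma b) * r ^ a * s ^ b * z ^ (a - 1) * (1 - z) ^ (b - 1) /
    (s * (1 - z) + r * z) ^ (a + b)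

lemma gammaPDFReal_mul_gammaPDFReal_div_one_sub {a r b s z y : ℝ} (hab : 0 < a + b)
    (hr : 0 < r) (hs : 0 < s) (hz₀ : 0 < z) (hz₁ : z < 1) (hy : 0 < y) :
    gammaPDFReal b s y * (y / (1 - z) ^ 2 * gammaPDFReal a r (y * z / (1 - z))) =
      gammaRatioPDFReal a r b s z * gammaPDFReal (a + b) ((s * (1 - z) + r * z) / (1 - z)) y := by
  have ht : 0 < 1 - z := by linarith
  have hK : 0 < s * (1 - z) + r * z := by positivity
  have hexp : -((s * (1 - z) + r * z) / (1 - z) * y) = -(s * y) + -(r * (y * z / (1 - z))) := by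
    field_simp; ring
  have hya : y ^ (a + b - 1) = y ^ (a - 1) * y ^ (b - 1) * y := by
    rw [← rpow_add hy, ← rpow_add_one hy.ne']; ring_nf
  have hta : (1 - z) ^ (a + b) = (1 - z) ^ (a - 1) * (1 - z) ^ (b - 1) * (1 - z) ^ 2 := by
    rw [← rpow_add ht, ← rpow_natCast, ← rpow_add ht]; norm_num; ring_nf
  simp only [gammaRatioPDFReal, gammaPDFReal, if_pos hy.le,
    if_pos (by positivity : 0 ≤ y * z / (1 - z)), hexp, exp_add, div_rpow hK.le ht.le,
    div_rpow (by positivity : 0 ≤ y * z) ht.le, mul_rpow hy.le hz₀.le, hya, hta]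
  field_simp

lemma setLIntegral_gammaPDF_mul_gammaPDF_div_one_sub {a r b s z : ℝ} (ha : 0 < a) (hr : 0 < r)
    (hb : 0 < b) (hs : 0 < s) (hz₀ : 0 < z) (hz₁ : z < 1) :
    ∫⁻ y in Ioi 0, gammaPDF b s y * (ENNReal.ofReal (y / (1 - z) ^ 2) *
      gammaPDF a r (y * z / (1 - z))) = ENNReal.ofReal (gammaRatioPDFReal a r b s z) := by
  have ht : 0 < 1 - z := by linarith
  have hrate : 0 < (s * (1 - z) + r * z) / (1 - z) := by positivity
  have hratio_nonneg : 0 ≤ gammaRatioPDFReal a r b s z := by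
    unfold gammaRatioPDFReal
    positivity
  calc ∫⁻ y in Ioi 0, gammaPDF b s y * (ENNReal.ofReal (y / (1 - z) ^ 2) *
        gammaPDF a r (y * z / (1 - z)))
      = ∫⁻ y in Ioi 0, ENNReal.ofReal (gammaRatioPDFReal a r b s z) *
          gammaPDF (a + b) ((s * (1 - z) + r * z) / (1 - z)) y := by
        refine setLIntegral_congr_fun measurableSet_Ioi fun y (hy : 0 < y) ↦ ?_
        simp only [gammaPDF]
        rw [← ENNReal.ofReal_mul (by positivity),
          ← ENNReal.ofReal_mul (gammaPDFReal_nonneg hb hs y), ← ENNReal.ofReal_mul hratio_nonneg,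
          gammaPDFReal_mul_gammaPDFReal_div_one_sub (add_pos ha hb) hr hs hz₀ hz₁ hy]
    _ = ENNReal.ofReal (gammaRatioPDFReal a r b s z) := by
        rw [lintegral_const_mul' _ _ ENNReal.ofReal_ne_top,
          setLIntegral_Ioi_zero_eq_lintegral fun y hy ↦ gammaPDF_of_neg hy,
          lintegral_gammaPDF_eq_one (add_pos ha hb) hrate, mul_one]

theorem map_div_add_of_gammaMeasure {Ω : Type*} [MeasurableSpace Ω] {μ : Measure Ω}
    {u v : Ω → ℝ} (hu : Measurable u) (hv : Measurable v) (huv : IndepFun u v μ) {a r b s : ℝ}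
    (ha : 0 < a) (hr : 0 < r) (hb : 0 < b) (hs : 0 < s)
    (hulaw : μ.map u = gammaMeasure a r) (hvlaw : μ.map v = gammaMeasure b s) :
    μ.map (fun ω ↦ u ω / (u ω + v ω)) =
      volume.withDensity
        ((Ioo 0 1).indicator fun z ↦ ENNReal.ofReal (gammaRatioPDFReal a r b s z)) := by
  have : IsProbabilityMeasure (μ.map u) := hulaw ▸ isProbabilityMeasure_gammaMeasure ha hr
  have : IsProbabilityMeasure (μ.map v) := hvlaw ▸ isProbabilityMeasure_gammaMeasure hb hs
  have hpair : μ.map (fun ω ↦ (u ω, v ω)) = (gammaMeasure a r).prod (gammaMeasure b s) := by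
    rw [← hulaw, ← hvlaw]
    exact (indepFun_iff_map_prod_eq_prod_map_map' hu.aemeasurable hv.aemeasurable
      inferInstance inferInstance).1 huv
  have hcomp : μ.map (fun ω ↦ u ω / (u ω + v ω)) =
      (μ.map fun ω ↦ (u ω, v ω)).map fun p ↦ p.1 / (p.1 + p.2) := by
    rw [Measure.map_map (by fun_prop) (hu.prodMk hv)]; rfl
  rw [hcomp, hpair, gammaMeasure, gammaMeasure,
    map_div_add_prod_withDensity (f := gammaPDF a r) (g := gammaPDF b s)
      (measurable_gammaPDFReal a r).ennreal_ofReal (measurable_gammaPDFReal b s).ennreal_ofReal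
      (fun _ ↦ gammaPDF_of_neg) (fun _ ↦ gammaPDF_of_neg)]
  congr 1
  refine indicator_congr fun z hz ↦ ?_
  exact setLIntegral_gammaPDF_mul_gammaPDF_div_one_sub ha hr hb hs hz.1 hz.2

/-- Here `w = r z / (s (1 - z) + r z)` is the value of `r X / (r X + s Y) ∼ Beta(a, b)`, so the
density is `dw/dz` times the Beta density at `w`. -/
lemma gammaRatioPDFReal_eq {a r b s z : ℝ} (hr : 0 < r) (hs : 0 < s) (hz₀ : 0 < z) (hz₁ : z < 1) :
    gammaRatioPDFReal a r b s z =
      r * s / (s * (1 - z) + r * z) ^ 2 *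
        ((r * z / (s * (1 - z) + r * z)) ^ (a - 1) *
          (1 - r * z / (s * (1 - z) + r * z)) ^ (b - 1)) /
        (Gamma a * Gamma b / Gamma (a + b)) := by
  have ht : 0 < 1 - z := by linarith
  have hK : 0 < s * (1 - z) + r * z := by positivity
  have hw : 1 - r * z / (s * (1 - z) + r * z) = s * (1 - z) / (s * (1 - z) + r * z) := by
    field_simp; ring
  have hKab : (s * (1 - z) + r * z) ^ (a + b) =
      (s * (1 - z) + r * z) ^ (a - 1) * (s * (1 - z) + r * z) ^ (b - 1) *
        (s * (1 - z) + r * z) ^ 2 := by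
    rw [← rpow_add hK, ← rpow_natCast, ← rpow_add hK]; norm_num; ring_nf
  have hra : r ^ a = r ^ (a - 1) * r := by rw [← rpow_add_one hr.ne']; ring_nf
  have hsb : s ^ b = s ^ (b - 1) * s := by rw [← rpow_add_one hs.ne']; ring_nf
  rw [hw, div_rpow (by positivity) hK.le, div_rpow (by positivity) hK.le,
    mul_rpow hr.le hz₀.le, mul_rpow hs.le ht.le, gammaRatioPDFReal, hKab, hra, hsb]
  field_simp

theorem density_of_gamma_ratio_general
    {Ω : Type*} [MeasurableSpace Ω] (μ : Measure Ω)
    (α γ : ℝ) (hα : 0 < α) (hγ : 0 < γ)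
    (u v : Ω → ℝ) (hu : Measurable u) (hv : Measurable v)
    (huv : IndepFun u v μ)
    (hulaw : Measure.map u μ = gammaMeasure (1 / 2) (1 / 2))
    (hvlaw : Measure.map v μ = gammaMeasure α (1 / (2 * γ)))
    (fZ : ℝ → ℝ)
    (hfZ : ∀ z : ℝ, fZ z =
      (γ / (1 - (1 - γ) * z) ^ 2) *
        ((γ * z / (1 - (1 - γ) * z)) ^ (-(1 / 2) : ℝ) *
          (1 - γ * z / (1 - (1 - γ) * z)) ^ (α - 1)) /
        (Real.Gamma (1 / 2) * Real.Gamma α / Real.Gamma (1 / 2 + α))) :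
    (∀ᵐ ω ∂μ, u ω / (u ω + v ω) ∈ Set.Ioo (0 : ℝ) 1) ∧
    Measure.map (fun ω => u ω / (u ω + v ω)) μ =
      volume.withDensity (fun z =>
        ENNReal.ofReal (Set.indicator (Set.Ioo (0 : ℝ) 1) fZ z)) := by
  refine ⟨?_, ?_⟩
  · filter_upwards [ae_pos_of_map_eq_gammaMeasure hu hulaw, ae_pos_of_map_eq_gammaMeasure hv hvlaw]
      with ω hu₀ hv₀
    exact ⟨by positivity, (div_lt_one (by positivity)).2 (by linarith)⟩
  rw [map_div_add_of_gammaMeasure hu hv huv (by norm_num) (by norm_num) hα (by positivity) hulaw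
    hvlaw]
  congr 1
  ext z
  by_cases hz : z ∈ Ioo 0 1
  · have hD : 0 < 1 - (1 - γ) * z := by nlinarith [hz.1, hz.2]
    have hjac : 1 / 2 * (1 / (2 * γ)) / (1 / (2 * γ) * (1 - z) + 1 / 2 * z) ^ 2 =
        γ / (1 - (1 - γ) * z) ^ 2 := by
      field_simp; ring
    have hw : 1 / 2 * z / (1 / (2 * γ) * (1 - z) + 1 / 2 * z) = γ * z / (1 - (1 - γ) * z) := by
      field_simp; ring
    rw [indicator_of_mem hz, indicator_of_mem hz, gammaRatioPDFReal_eq (by norm_num) (by positivity)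
      hz.1 hz.2, hjac, hw, hfZ]
    norm_num
  · simp only [indicator_of_notMem hz, ENNReal.ofReal_zero]

/-- (Density in Proposition 2.)  Let `u ∼ Gamma(shape 1/2, scale 2)` and
`v ∼ Gamma(shape α, scale 2γ)` be independent.  Then `Z = u/(u+v)` takes values in `(0,1)`
and has density `z ↦ (γ / (1−(1−γ)z)²) · w^{−1/2}(1−w)^{α−1} / B(1/2,α)` on `(0,1)`, where
`w = γz/(1−(1−γ)z)` and `B(1/2,α) = Γ(1/2)Γ(α)/Γ(1/2+α)`.
(`gammaMeasure a r` is parametrized by shape `a` and *rate* `r = 1/scale`.) -/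
theorem density_of_gamma_ratio
    {Ω : Type*} [MeasurableSpace Ω] (μ : Measure Ω) [IsProbabilityMeasure μ]
    (α γ : ℝ) (hα : 0 < α) (hγ : 0 < γ)
    (u v : Ω → ℝ) (hu : Measurable u) (hv : Measurable v)
    (huv : IndepFun u v μ)
    (hulaw : Measure.map u μ = gammaMeasure (1 / 2) (1 / 2))
    (hvlaw : Measure.map v μ = gammaMeasure α (1 / (2 * γ)))
    (fZ : ℝ → ℝ)
    (hfZ : ∀ z : ℝ, fZ z =
      (γ / (1 - (1 - γ) * z) ^ 2) *
        ((γ * z / (1 - (1 - γ) * z)) ^ (-(1 / 2) : ℝ) *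
          (1 - γ * z / (1 - (1 - γ) * z)) ^ (α - 1)) /
        (Real.Gamma (1 / 2) * Real.Gamma α / Real.Gamma (1 / 2 + α))) :
    (∀ᵐ ω ∂μ, u ω / (u ω + v ω) ∈ Set.Ioo (0 : ℝ) 1) ∧
    Measure.map (fun ω => u ω / (u ω + v ω)) μ =
      volume.withDensity (fun z =>
        ENNReal.ofReal (Set.indicator (Set.Ioo (0 : ℝ) 1) fZ z)) :=
  density_of_gamma_ratio_general μ α γ hα hγ u v hu hv huv hulaw hvlaw fZ hfZ
end

section
/- (Expectation in Proposition 2, with the Gauss hypergeometric function ₂F₁(3/2, 1/2+α; 3/2+α; 1−γ) written via its Euler integral representation.) Let α > 0 and γ > 0. Let u and v be independent real random variables where u has the Gamma distribution with shape 1/2 and scale 2 and v has the Gamma distribution with shape α and scale 2γ. Then E[ u/(u+v) ] = γ^{1/2} · ( Γ(3/2) Γ(1/2+α) / ( Γ(1/2) Γ(3/2+α) ) ) · ( Γ(3/2+α) / Γ(1/2+α) ) · ∫₀¹ t^{α−1/2} (1 − (1−γ)t)^{−3/2} dt; equivalently, E[ u/(u+v) ] = (√γ / 2) ∫₀¹ t^{α−1/2}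 (1 − (1−γ)t)^{−3/2} dt. -/
open MeasureTheory ProbabilityTheory Real

open Set
open scoped ENNReal

/-!
Since `x / (x + y) = ∫₀^∞ x e^{-s x} e^{-s y} ds`, Tonelli and independence give
`E[u / (u + v)] = ∫₀^∞ E[u e^{-s u}] E[e^{-s v}] ds`. For `u ∼ Γ(a, rate r)` and `v ∼ Γ(b, rate q)`
both factors are Gamma integrals, and the integrand is `a r^a (r + s)^{-(a+1)} (q / (q + s))^b`.
The substitution `s = q (1/t - 1)` turns this into the Euler integral
`a (r/q)^a ∫₀¹ t^{a+b-1} (1 - (1 - r/q) t)^{-(a+1)} dt`.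
Working with lower Lebesgue integrals throughout, no integrability has to be checked.
-/

lemma lintegral_rpow_mul_exp_neg_mul_Ioi {p c : ℝ} (hp : 0 < p) (hc : 0 < c) :
    ∫⁻ x in Ioi 0, ENNReal.ofReal (x ^ (p - 1) * exp (-(c * x))) =
      ENNReal.ofReal ((1 / c) ^ p * Gamma p) := by
  have hint : IntegrableOn (fun x : ℝ ↦ x ^ (p - 1) * exp (-(c * x))) (Ioi 0) := by
    simpa using integrableOn_rpow_mul_exp_neg_mul_rpow (p := 1) (by linarith) one_pos hc
  rw [← integral_rpow_mul_exp_neg_mul_Ioi hp hc, ofReal_integral_eq_lintegral_ofReal hint]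
  filter_upwards [ae_restrict_mem measurableSet_Ioi] with x (hx : 0 < x)
  positivity

lemma lintegral_exp_neg_mul_Ioi {c : ℝ} (hc : 0 < c) :
    ∫⁻ x in Ioi 0, ENNReal.ofReal (exp (-(c * x))) = ENNReal.ofReal c⁻¹ := by
  simpa using lintegral_rpow_mul_exp_neg_mul_Ioi one_pos hc

lemma ofReal_div_add_eq_lintegral_exp_neg {x y : ℝ} (hx : 0 ≤ x) (hy : 0 ≤ y) :
    ENNReal.ofReal (x / (x + y)) =
      ∫⁻ s in Ioi 0, ENNReal.ofReal (x * exp (-(s * x))) * ENNReal.ofReal (exp (-(s * y))) := by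
  rcases hx.eq_or_lt with rfl | hx
  · simp
  have hxy : 0 < x + y := by linarith
  calc ENNReal.ofReal (x / (x + y))
      = ENNReal.ofReal x * ∫⁻ s in Ioi 0, ENNReal.ofReal (exp (-((x + y) * s))) := by
        rw [lintegral_exp_neg_mul_Ioi hxy, ← ENNReal.ofReal_mul hx.le, div_eq_mul_inv]
    _ = _ := by
        rw [← lintegral_const_mul' _ _ ENNReal.ofReal_ne_top]
        refine setLIntegral_congr_fun measurableSet_Ioi fun s _ ↦ ?_
        rw [← ENNReal.ofReal_mul hx.le, ← ENNReal.ofReal_mul (by positivity), mul_assoc,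
          ← exp_add]
        ring_nf

lemma image_mul_inv_sub_one_Ioo {q : ℝ} (hq : 0 < q) :
    (fun t : ℝ ↦ q * (t⁻¹ - 1)) '' Ioo 0 1 = Ioi 0 := by
  ext s
  constructor
  · rintro ⟨t, ⟨ht0, ht1⟩, rfl⟩
    exact mul_pos hq (sub_pos.2 ((one_lt_inv₀ ht0).2 ht1))
  · intro (hs : 0 < s)
    refine ⟨q / (q + s), ⟨by positivity, (div_lt_one (by positivity)).2 (by linarith)⟩, ?_⟩
    field_simp
    ring

lemma lintegral_Ioi_div_rpow_mul_div_rpow_eq_lintegral_Ioo {a r b q : ℝ} (hr : 0 < r)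
    (hq : 0 < q) :
    ∫⁻ s in Ioi 0, ENNReal.ofReal (a * r ^ a / (r + s) ^ (a + 1) * (q / (q + s)) ^ b) =
      ∫⁻ t in Ioo 0 1, ENNReal.ofReal
        (a * (r / q) ^ a * (t ^ (a + b - 1) * (1 - (1 - r / q) * t) ^ (-(a + 1)))) := by
  have hderiv : ∀ t ∈ Ioo (0 : ℝ) 1,
      HasDerivWithinAt (fun t ↦ q * (t⁻¹ - 1)) (q * -(t ^ 2)⁻¹) (Ioo 0 1) t :=
    fun t ht ↦ (((hasDerivAt_inv ht.1.ne').sub_const 1).const_mul q).hasDerivWithinAt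
  have hinj : InjOn (fun t : ℝ ↦ q * (t⁻¹ - 1)) (Ioo 0 1) := fun t _ t' _ h ↦ by
    simpa [hq.ne'] using h
  rw [← image_mul_inv_sub_one_Ioo hq,
    lintegral_image_eq_lintegral_abs_deriv_mul measurableSet_Ioo hderiv hinj]
  refine setLIntegral_congr_fun measurableSet_Ioo fun t ⟨ht0, ht1⟩ ↦ ?_
  set c := r / q with hc
  have hrc : r = c * q := by rw [hc]; field_simp
  have hw : 0 < 1 - (1 - c) * t := by nlinarith [div_pos hr hq]
  have hqs : q + q * (t⁻¹ - 1) = q * t⁻¹ := by ring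
  have hrs : r + q * (t⁻¹ - 1) = q * t⁻¹ * (1 - (1 - c) * t) := by rw [hrc]; field_simp; ring
  rw [← ENNReal.ofReal_mul (abs_nonneg _),
    abs_of_nonpos (by nlinarith [inv_pos.2 (pow_pos ht0 2)]), hqs, hrs]
  congr 1
  rw [hrc, mul_rpow (by positivity) hq.le, mul_rpow (by positivity) hw.le,
    mul_rpow hq.le (by positivity), inv_rpow ht0.le, rpow_neg hw.le, rpow_add_one hq.ne',
    rpow_add_one ht0.ne', rpow_sub_one ht0.ne', rpow_add ht0,
    show q / (q * t⁻¹) = t by field_simp]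
  field_simp

namespace ProbabilityTheory

instance (a r : ℝ) : SFinite (gammaMeasure a r) := by
  unfold gammaMeasure
  infer_instance

lemma ae_nonneg_gammaMeasure (a r : ℝ) : ∀ᵐ x ∂gammaMeasure a r, 0 ≤ x := by
  have hneg : {x : ℝ | ¬0 ≤ x} = Iio 0 := by ext; simp
  rw [ae_iff, hneg, gammaMeasure, withDensity_apply _ measurableSet_Iio]
  exact lintegral_gammaPDF_of_nonpos le_rfl

lemma ae_nonneg_gammaMeasure_prod (a r b q : ℝ) :
    ∀ᵐ p ∂(gammaMeasure a r).prod (gammaMeasure b q), 0 ≤ p.1 ∧ 0 ≤ p.2 :=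
  (Measure.quasiMeasurePreserving_fst.ae (ae_nonneg_gammaMeasure a r)).and
    (Measure.quasiMeasurePreserving_snd.ae (ae_nonneg_gammaMeasure b q))

lemma lintegral_gammaMeasure (a r : ℝ) {f : ℝ → ℝ≥0∞} (hf : Measurable f) :
    ∫⁻ x, f x ∂gammaMeasure a r =
      ∫⁻ x in Ioi 0, ENNReal.ofReal (r ^ a / Gamma a * x ^ (a - 1) * exp (-(r * x))) * f x := by
  have hsupp : (gammaPDF a r * f).support ⊆ Ici 0 := fun x hx ↦ by
    by_contra h
    exact hx (by simp [gammaPDF_of_neg (not_le.mp h)])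
  have hpdf : Measurable (gammaPDF a r) := (measurable_gammaPDFReal a r).ennreal_ofReal
  rw [gammaMeasure, lintegral_withDensity_eq_lintegral_mul _ hpdf hf,
    ← setLIntegral_eq_of_support_subset hsupp, setLIntegral_congr Ioi_ae_eq_Ici.symm]
  exact setLIntegral_congr_fun measurableSet_Ioi fun x (hx : 0 < x) ↦ by
    simp [gammaPDF_of_nonneg hx.le]

lemma lintegral_rpow_mul_exp_neg_mul_gammaMeasure {a r k s : ℝ} (ha : 0 < a) (hr : 0 < r)
    (hak : 0 < a + k) (hrs : 0 < r + s) :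
    ∫⁻ x, ENNReal.ofReal (x ^ k * exp (-(s * x))) ∂gammaMeasure a r =
      ENNReal.ofReal (r ^ a * Gamma (a + k) / (Gamma a * (r + s) ^ (a + k))) := by
  have hdensity : ∀ x ∈ Ioi (0 : ℝ),
      ENNReal.ofReal (r ^ a / Gamma a * x ^ (a - 1) * exp (-(r * x))) *
          ENNReal.ofReal (x ^ k * exp (-(s * x))) =
        ENNReal.ofReal (r ^ a / Gamma a) *
          ENNReal.ofReal (x ^ (a + k - 1) * exp (-((r + s) * x))) := fun x (hx : 0 < x) ↦ by
    rw [← ENNReal.ofReal_mul (by positivity), ← ENNReal.ofReal_mul (by positivity)]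
    congr 1
    rw [show a + k - 1 = a - 1 + k by ring, rpow_add hx, add_mul, neg_add, exp_add]
    ring
  rw [lintegral_gammaMeasure a r (by fun_prop),
    setLIntegral_congr_fun measurableSet_Ioi hdensity,
    lintegral_const_mul' _ _ ENNReal.ofReal_ne_top, lintegral_rpow_mul_exp_neg_mul_Ioi hak hrs,
    ← ENNReal.ofReal_mul (by positivity), one_div, inv_rpow hrs.le]
  congr 1
  field_simp

theorem lintegral_div_add_gammaMeasure_prod {a r b q : ℝ} (ha : 0 < a) (hr : 0 < r) (hb : 0 < b)
    (hq : 0 < q) :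
    ∫⁻ p, ENNReal.ofReal (p.1 / (p.1 + p.2)) ∂(gammaMeasure a r).prod (gammaMeasure b q) =
      ∫⁻ s in Ioi 0, ENNReal.ofReal (a * r ^ a / (r + s) ^ (a + 1) * (q / (q + s)) ^ b) := by
  calc _ = ∫⁻ p, (∫⁻ s in Ioi 0, ENNReal.ofReal (p.1 * exp (-(s * p.1))) *
          ENNReal.ofReal (exp (-(s * p.2)))) ∂(gammaMeasure a r).prod (gammaMeasure b q) :=
        lintegral_congr_ae <| (ae_nonneg_gammaMeasure_prod a r b q).mono fun p hp ↦
          ofReal_div_add_eq_lintegral_exp_neg hp.1 hp.2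
    _ = ∫⁻ s in Ioi 0, (∫⁻ x, ENNReal.ofReal (x * exp (-(s * x))) ∂gammaMeasure a r) *
          ∫⁻ y, ENNReal.ofReal (exp (-(s * y))) ∂gammaMeasure b q := by
        rw [lintegral_lintegral_swap (by fun_prop)]
        exact lintegral_congr fun s ↦ lintegral_prod_mul
          (f := fun x ↦ ENNReal.ofReal (x * exp (-(s * x))))
          (g := fun y ↦ ENNReal.ofReal (exp (-(s * y)))) (by fun_prop) (by fun_prop)
    _ = _ := by
        refine setLIntegral_congr_fun measurableSet_Ioi fun s (hs : 0 < s) ↦ ?_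
        have h1 := lintegral_rpow_mul_exp_neg_mul_gammaMeasure (k := 1) ha hr (by linarith)
          (by linarith : 0 < r + s)
        have h0 := lintegral_rpow_mul_exp_neg_mul_gammaMeasure (k := 0) hb hq (by linarith)
          (by linarith : 0 < q + s)
        simp only [rpow_one, rpow_zero, one_mul, add_zero] at h1 h0
        rw [h1, h0, ← ENNReal.ofReal_mul (by positivity), Gamma_add_one ha.ne',
          div_rpow hq.le (by positivity)]
        congr 1
        field_simp

theorem integral_div_add_gammaMeasure_prod {a r b q : ℝ} (ha : 0 < a) (hr : 0 < r) (hb : 0 < b)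
    (hq : 0 < q) :
    ∫ p, p.1 / (p.1 + p.2) ∂(gammaMeasure a r).prod (gammaMeasure b q) =
      a * (r / q) ^ a *
        ∫ t in (0 : ℝ)..1, t ^ (a + b - 1) * (1 - (1 - r / q) * t) ^ (-(a + 1)) := by
  have hratio_nonneg :
      0 ≤ᵐ[(gammaMeasure a r).prod (gammaMeasure b q)] fun p ↦ p.1 / (p.1 + p.2) :=
    (ae_nonneg_gammaMeasure_prod a r b q).mono fun p hp ↦ div_nonneg hp.1 (add_nonneg hp.1 hp.2)
  have hintegrand_nonneg : 0 ≤ᵐ[volume.restrict (Ioo (0 : ℝ) 1)] fun t ↦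
      a * (r / q) ^ a * (t ^ (a + b - 1) * (1 - (1 - r / q) * t) ^ (-(a + 1))) := by
    filter_upwards [ae_restrict_mem measurableSet_Ioo] with t ⟨ht0, ht1⟩
    have : 0 < 1 - (1 - r / q) * t := by nlinarith [div_pos hr hq]
    positivity
  rw [intervalIntegral.integral_of_le zero_le_one, integral_Ioc_eq_integral_Ioo,
    ← integral_const_mul, integral_eq_lintegral_of_nonneg_ae hratio_nonneg
      (by fun_prop : Measurable fun p : ℝ × ℝ ↦ p.1 / (p.1 + p.2)).aestronglyMeasurable,
    integral_eq_lintegral_of_nonneg_ae hintegrand_nonneg (by fun_prop),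
    lintegral_div_add_gammaMeasure_prod ha hr hb hq,
    lintegral_Ioi_div_rpow_mul_div_rpow_eq_lintegral_Ioo hr hq]

theorem IndepFun.integral_div_add_of_gammaMeasure {Ω : Type*} [MeasurableSpace Ω]
    {μ : Measure Ω} [IsFiniteMeasure μ] {u v : Ω → ℝ} {a r b q : ℝ} (ha : 0 < a) (hr : 0 < r)
    (hb : 0 < b) (hq : 0 < q) (hu : AEMeasurable u μ) (hv : AEMeasurable v μ)
    (huv : IndepFun u v μ) (hulaw : μ.map u = gammaMeasure a r)
    (hvlaw : μ.map v = gammaMeasure b q) :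
    ∫ ω, u ω / (u ω + v ω) ∂μ =
      a * (r / q) ^ a *
        ∫ t in (0 : ℝ)..1, t ^ (a + b - 1) * (1 - (1 - r / q) * t) ^ (-(a + 1)) := by
  rw [← integral_div_add_gammaMeasure_prod ha hr hb hq, ← hulaw, ← hvlaw,
    ← (indepFun_iff_map_prod_eq_prod_map_map hu hv).mp huv,
    integral_map (hu.prodMk hv)
      (by fun_prop : Measurable fun p : ℝ × ℝ ↦ p.1 / (p.1 + p.2)).aestronglyMeasurable]

end ProbabilityTheory

/-- (Expectation in Proposition 2, with `₂F₁(3/2, 1/2+α; 3/2+α; 1−γ)` written via its Euler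
integral representation.)  Let `u ∼ Gamma(shape 1/2, scale 2)` and
`v ∼ Gamma(shape α, scale 2γ)` be independent.  Then
`E[u/(u+v)] = γ^{1/2} · (Γ(3/2)Γ(1/2+α)/(Γ(1/2)Γ(3/2+α))) · (Γ(3/2+α)/Γ(1/2+α)) ·
∫₀¹ t^{α−1/2}(1−(1−γ)t)^{−3/2} dt = (√γ/2) ∫₀¹ t^{α−1/2}(1−(1−γ)t)^{−3/2} dt`.
(`gammaMeasure a r` is parametrized by shape `a` and *rate* `r = 1/scale`.) -/
theorem expectation_of_gamma_ratio
    {Ω : Type*} [MeasurableSpace Ω] (μ : Measure Ω) [IsProbabilityMeasure μ]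
    (α γ : ℝ) (hα : 0 < α) (hγ : 0 < γ)
    (u v : Ω → ℝ) (hu : Measurable u) (hv : Measurable v)
    (huv : IndepFun u v μ)
    (hulaw : Measure.map u μ = gammaMeasure (1 / 2) (1 / 2))
    (hvlaw : Measure.map v μ = gammaMeasure α (1 / (2 * γ))) :
    (∫ ω, u ω / (u ω + v ω) ∂μ) =
      γ ^ ((1 : ℝ) / 2) *
        (Real.Gamma (3 / 2) * Real.Gamma (1 / 2 + α) /
          (Real.Gamma (1 / 2) * Real.Gamma (3 / 2 + α))) *
        (Real.Gamma (3 / 2 + α) / Real.Gamma (1 / 2 + α)) *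
        (∫ t in (0 : ℝ)..1, t ^ (α - 1 / 2) * (1 - (1 - γ) * t) ^ (-(3 : ℝ) / 2)) ∧
    (∫ ω, u ω / (u ω + v ω) ∂μ) =
      (Real.sqrt γ / 2) *
        (∫ t in (0 : ℝ)..1, t ^ (α - 1 / 2) * (1 - (1 - γ) * t) ^ (-(3 : ℝ) / 2)) := by
  have hE := huv.integral_div_add_of_gammaMeasure (by norm_num) (by norm_num) hα (by positivity)
    hu.aemeasurable hv.aemeasurable hulaw hvlaw
  rw [show (1 / 2 : ℝ) / (1 / (2 * γ)) = γ by field_simp,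
    show (1 / 2 : ℝ) + α - 1 = α - 1 / 2 by ring,
    show -((1 : ℝ) / 2 + 1) = -3 / 2 by norm_num] at hE
  have hval : ∫ ω, u ω / (u ω + v ω) ∂μ = sqrt γ / 2 *
      ∫ t in (0 : ℝ)..1, t ^ (α - 1 / 2) * (1 - (1 - γ) * t) ^ (-(3 : ℝ) / 2) := by
    rw [hE, sqrt_eq_rpow]
    ring
  refine ⟨?_, hval⟩
  have hGamma : Gamma (3 / 2) = Gamma (1 / 2) / 2 := by
    rw [show (3 / 2 : ℝ) = 1 / 2 + 1 by norm_num, Gamma_add_one (by norm_num)]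
    ring
  have := Gamma_pos_of_pos (by norm_num : (0 : ℝ) < 1 / 2)
  have := Gamma_pos_of_pos (by linarith : (0 : ℝ) < 1 / 2 + α)
  have := Gamma_pos_of_pos (by linarith : (0 : ℝ) < 3 / 2 + α)
  rw [hval, hGamma, ← sqrt_eq_rpow]
  field_simp
end
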